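/- (Main theorem, asymptotic regularity under (C2_q)) In the Tikhonov-Mann setting, assume: β_n > 0 for all n; σ₂ : ℕ → ℕ is a rate of convergence towards 0 of the sequence of partial products P_n = ∏_{i=0}^{n} β_{i+1}; σ₃ is a Cauchy modulus for the convergent series ∑ |β_{n+1}−β_n|; σ₄ is a Cauchy modulus for the convergent series ∑ |λ_{n+1}−λ_n|; K ∈ ℕ satisfies K ≥ M. Define χ(k) = max{σ₃(8K(k+1)−1), σ₄(8K(k+1)−1)}, and suppose ψ₀ : ℕ → ℕ takes positive values and satisfies 1/ψ₀(k) ≤ P_{χ(3k+2)} for all k ∈ ℕ. Then Σ̃(k) = max{σ₂(6K(k+1)ψ₀(k)−1), χ(3k+2)+1} + 1 is a rate of asymptotic regularity for (x_n), i.e., d(x_n,x_{n+1}) ≤ 1/(k+1) for all k ∈ ℕ and all n ≥ Σ̃(k). -/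

import Mathlib

/-!
Write `a n = d(x n, x (n+1))`. All iterates stay within `M` of `p`, and (W2), (W4) together with
nonexpansiveness give `a (n+1) ≤ β (n+1) a n + 2M (|β (n+1) - β n| + |λ (n+1) - λ n|)`.
Unrolled from `m + 1`, `m = χ(3k+2)`, this bounds `a n` by `2M` times the tail product
`∏_{i=m+1}^{n-1} β (i+1) = P (n-1) / P m ≤ ψ₀ k · P (n-1)`, which `σ₂` makes small, plus `2M` times
the tails of the two series of increments, which `σ₃` and `σ₄` make small. The three
contributions are at most `1/(3(k+1))`, `1/(12(k+1))` and `1/(12(k+1))`.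
-/

/-- A `W`-hyperbolic space: a metric space together with a convexity mapping
`W x y l` (written `(1-l)x + l y` in the paper) satisfying (W1)-(W4). -/
structure WHyp (X : Type*) [MetricSpace X] where
  W : X → X → ℝ → X
  W1 : ∀ x y z : X, ∀ l ∈ Set.Icc (0:ℝ) 1,
    dist z (W x y l) ≤ (1 - l) * dist z x + l * dist z y
  W2 : ∀ x y : X, ∀ l ∈ Set.Icc (0:ℝ) 1, ∀ l' ∈ Set.Icc (0:ℝ) 1,
    dist (W x y l) (W x y l') = |l - l'| * dist x y
  W3 : ∀ x y : X, ∀ l ∈ Set.Icc (0:ℝ) 1, W x y l = W y x (1 - l)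
  W4 : ∀ x y z w : X, ∀ l ∈ Set.Icc (0:ℝ) 1,
    dist (W x z l) (W y w l) ≤ (1 - l) * dist x y + l * dist z w

open Finset

namespace WHyp

variable {X : Type*} [MetricSpace X] (H : WHyp X)

theorem dist_W_le_max (x y z : X) {l : ℝ} (hl : l ∈ Set.Icc (0 : ℝ) 1) :
    dist (H.W x y l) z ≤ max (dist x z) (dist y z) := by
  have h := H.W1 x y z l hl
  rw [dist_comm z x, dist_comm z y, dist_comm z] at h
  nlinarith [hl.1, hl.2, le_max_left (dist x z) (dist y z), le_max_right (dist x z) (dist y z)]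

theorem dist_W_W_le (x y x' y' : X) {l l' : ℝ} (hl : l ∈ Set.Icc (0 : ℝ) 1)
    (hl' : l' ∈ Set.Icc (0 : ℝ) 1) :
    dist (H.W x y l) (H.W x' y' l') ≤
      |l - l'| * dist x y + ((1 - l') * dist x x' + l' * dist y y') :=
  calc dist (H.W x y l) (H.W x' y' l')
      ≤ dist (H.W x y l) (H.W x y l') + dist (H.W x y l') (H.W x' y' l') := dist_triangle _ _ _
    _ ≤ _ := by rw [H.W2 x y l hl l' hl']; linarith [H.W4 x x' y y' l' hl']

end WHyp

theorem le_prod_mul_add_sum_of_le_mul_add {a b c : ℕ → ℝ} (hb₀ : ∀ n, 0 ≤ b n)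
    (hb₁ : ∀ n, b n ≤ 1) (hc : ∀ n, 0 ≤ c n) (ha : ∀ n, a (n + 1) ≤ b n * a n + c n)
    {N n : ℕ} (hNn : N ≤ n) :
    a n ≤ (∏ i ∈ Ico N n, b i) * a N + ∑ i ∈ Ico N n, c i := by
  induction n, hNn using Nat.le_induction with
  | base => simp
  | succ n hNn ih =>
    rw [prod_Ico_succ_top hNn, sum_Ico_succ_top hNn]
    have hS : 0 ≤ ∑ i ∈ Ico N n, c i := sum_nonneg fun i _ => hc i
    calc a (n + 1) ≤ b n * a n + c n := ha n
      _ ≤ b n * ((∏ i ∈ Ico N n, b i) * a N + ∑ i ∈ Ico N n, c i) + c n := by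
          gcongr; exact hb₀ n
      _ ≤ _ := by nlinarith [hb₀ n, hb₁ n]

theorem prod_Icc_le_mul_prod_range {f : ℕ → ℝ} (hf : ∀ i, 0 ≤ f i) {ψ : ℝ} (hψ : 0 < ψ)
    {m : ℕ} (hm : 1 / ψ ≤ ∏ i ∈ range (m + 1), f i) (q : ℕ) :
    ∏ i ∈ Icc (m + 1) (m + q), f i ≤ ψ * ∏ i ∈ range (m + q + 1), f i := by
  rw [← prod_range_mul_prod_Ico f (by omega : m + 1 ≤ m + q + 1), Ico_add_one_right_eq_Icc]
  have h1 : 1 ≤ ψ * ∏ i ∈ range (m + 1), f i := by rwa [div_le_iff₀' hψ] at hm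
  have h2 : 0 ≤ ∏ i ∈ Icc (m + 1) (m + q), f i := prod_nonneg fun i _ => hf i
  nlinarith

/-- The truncated subtraction in `c - 1` is harmless: `c = 0` forces `a = 0`. -/
theorem natCast_mul_le_one_div {a b c : ℕ} {t : ℝ} (hb : 0 < b) (habc : a * b = c)
    (ht : t ≤ 1 / (((c - 1 : ℕ) : ℝ) + 1)) : (a : ℝ) * t ≤ 1 / b := by
  subst habc
  rcases Nat.eq_zero_or_pos a with rfl | ha
  · simp
  rw [Nat.cast_sub (Nat.one_le_iff_ne_zero.mpr (Nat.mul_pos ha hb).ne'), Nat.cast_mul,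
    Nat.cast_one, sub_add_cancel] at ht
  calc (a : ℝ) * t ≤ a * (1 / (a * b)) := by gcongr
    _ = 1 / b := by field_simp

structure TikhonovMannIteration {X : Type*} [MetricSpace X] (H : WHyp X) (C : Set X)
    (T : X → X) (p u : X) (lam beta : ℕ → ℝ) (x y : ℕ → X) : Prop where
  convex : ∀ x ∈ C, ∀ y ∈ C, ∀ l ∈ Set.Icc (0 : ℝ) 1, H.W x y l ∈ C
  mapsTo : ∀ x ∈ C, T x ∈ C
  nonexpansive : ∀ x ∈ C, ∀ y ∈ C, dist (T x) (T y) ≤ dist x y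
  fixedPoint_mem : p ∈ C
  isFixedPt : T p = p
  anchor_mem : u ∈ C
  lam_mem : ∀ n, lam n ∈ Set.Icc (0 : ℝ) 1
  beta_mem : ∀ n, beta n ∈ Set.Icc (0 : ℝ) 1
  start_mem : x 0 ∈ C
  y_eq : ∀ n, y n = H.W u (x n) (beta n)
  x_succ : ∀ n, x (n + 1) = H.W (y n) (T (y n)) (lam n)

namespace TikhonovMannIteration

variable {X : Type*} [MetricSpace X] {H : WHyp X} {C : Set X} {T : X → X} {p u : X}
  {lam beta : ℕ → ℝ} {x y : ℕ → X}

theorem y_mem_of_x_mem (h : TikhonovMannIteration H C T p u lam beta x y) {n : ℕ}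
    (hx : x n ∈ C) : y n ∈ C :=
  h.y_eq n ▸ h.convex u h.anchor_mem _ hx _ (h.beta_mem n)

theorem x_mem (h : TikhonovMannIteration H C T p u lam beta x y) (n : ℕ) : x n ∈ C := by
  induction n with
  | zero => exact h.start_mem
  | succ n ih =>
    have hy := h.y_mem_of_x_mem ih
    exact h.x_succ n ▸ h.convex _ hy _ (h.mapsTo _ hy) _ (h.lam_mem n)

theorem y_mem (h : TikhonovMannIteration H C T p u lam beta x y) (n : ℕ) : y n ∈ C :=
  h.y_mem_of_x_mem (h.x_mem n)

theorem dist_T_le (h : TikhonovMannIteration H C T p u lam beta x y) {z : X} (hz : z ∈ C) :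
    dist (T z) p ≤ dist z p := by
  simpa only [h.isFixedPt] using h.nonexpansive z hz p h.fixedPoint_mem

theorem dist_y_le_of_dist_x_le (h : TikhonovMannIteration H C T p u lam beta x y) {n : ℕ}
    (hx : dist (x n) p ≤ max (dist (x 0) p) (dist u p)) :
    dist (y n) p ≤ max (dist (x 0) p) (dist u p) := by
  rw [h.y_eq n]
  exact (H.dist_W_le_max _ _ _ (h.beta_mem n)).trans (max_le (le_max_right _ _) hx)

theorem dist_x_le (h : TikhonovMannIteration H C T p u lam beta x y) (n : ℕ) :
    dist (x n) p ≤ max (dist (x 0) p) (dist u p) := by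
  induction n with
  | zero => exact le_max_left _ _
  | succ n ih =>
    have hy := h.dist_y_le_of_dist_x_le ih
    rw [h.x_succ n]
    exact (H.dist_W_le_max _ _ _ (h.lam_mem n)).trans
      (max_le hy ((h.dist_T_le (h.y_mem n)).trans hy))

theorem dist_y_le (h : TikhonovMannIteration H C T p u lam beta x y) (n : ℕ) :
    dist (y n) p ≤ max (dist (x 0) p) (dist u p) :=
  h.dist_y_le_of_dist_x_le (h.dist_x_le n)

theorem dist_x_x_succ_le (h : TikhonovMannIteration H C T p u lam beta x y) (n : ℕ) :
    dist (x n) (x (n + 1)) ≤ 2 * max (dist (x 0) p) (dist u p) := by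
  linarith [dist_triangle_right (x n) (x (n + 1)) p, h.dist_x_le n, h.dist_x_le (n + 1)]

theorem dist_succ_le_mul_dist_add (h : TikhonovMannIteration H C T p u lam beta x y) (n : ℕ) :
    dist (x (n + 1)) (x (n + 2)) ≤ beta (n + 1) * dist (x n) (x (n + 1)) +
      2 * max (dist (x 0) p) (dist u p) * (|beta (n + 1) - beta n| + |lam (n + 1) - lam n|) := by
  set M := max (dist (x 0) p) (dist u p)
  have hux : dist u (x n) ≤ 2 * M := by
    linarith [dist_triangle_right u (x n) p, le_max_right (dist (x 0) p) (dist u p),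
      h.dist_x_le n]
  have hyT : dist (y n) (T (y n)) ≤ 2 * M := by
    linarith [dist_triangle_right (y n) (T (y n)) p, h.dist_y_le n, h.dist_T_le (h.y_mem n)]
  have hyy : dist (y n) (y (n + 1)) ≤
      |beta n - beta (n + 1)| * dist u (x n) + beta (n + 1) * dist (x n) (x (n + 1)) := by
    rw [h.y_eq n, h.y_eq (n + 1)]
    simpa using H.dist_W_W_le u (x n) u (x (n + 1)) (h.beta_mem n) (h.beta_mem (n + 1))
  have hxx : dist (x (n + 1)) (x (n + 2)) ≤
      |lam n - lam (n + 1)| * dist (y n) (T (y n)) + dist (y n) (y (n + 1)) := by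
    have hl := h.lam_mem (n + 1)
    rw [h.x_succ n, h.x_succ (n + 1)]
    refine (H.dist_W_W_le _ _ _ _ (h.lam_mem n) hl).trans ?_
    nlinarith [hl.1, hl.2, h.nonexpansive _ (h.y_mem n) _ (h.y_mem (n + 1))]
  rw [abs_sub_comm] at hyy hxx
  nlinarith [abs_nonneg (beta (n + 1) - beta n), abs_nonneg (lam (n + 1) - lam n)]

theorem dist_le_two_mul_prod_add_sum (h : TikhonovMannIteration H C T p u lam beta x y)
    (m q : ℕ) :
    dist (x (m + q + 1)) (x (m + q + 1 + 1)) ≤ 2 * max (dist (x 0) p) (dist u p) *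
      (∏ i ∈ Icc (m + 1) (m + q), beta (i + 1) +
        ∑ i ∈ Icc (m + 1) (m + q), |beta (i + 1) - beta i| +
        ∑ i ∈ Icc (m + 1) (m + q), |lam (i + 1) - lam i|) := by
  set M := max (dist (x 0) p) (dist u p)
  have hM : 0 ≤ M := dist_nonneg.trans (le_max_left _ _)
  have hrec := le_prod_mul_add_sum_of_le_mul_add (a := fun n => dist (x n) (x (n + 1)))
    (c := fun n => 2 * M * (|beta (n + 1) - beta n| + |lam (n + 1) - lam n|))
    (fun n => (h.beta_mem (n + 1)).1) (fun n => (h.beta_mem (n + 1)).2)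
    (fun n => by positivity) h.dist_succ_le_mul_dist_add (by omega : m + 1 ≤ m + q + 1)
  simp only [Ico_add_one_right_eq_Icc, ← mul_sum, sum_add_distrib] at hrec
  have hP : 0 ≤ ∏ i ∈ Icc (m + 1) (m + q), beta (i + 1) :=
    prod_nonneg fun i _ => (h.beta_mem (i + 1)).1
  nlinarith [h.dist_x_x_succ_le (m + 1)]

end TikhonovMannIteration

theorem tm_as_reg_C2q_general
    {X : Type*} [MetricSpace X] (H : WHyp X) (C : Set X)
    (hCconv : ∀ x ∈ C, ∀ y ∈ C, ∀ l ∈ Set.Icc (0:ℝ) 1, H.W x y l ∈ C)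
    (T : X → X) (hTmaps : ∀ x ∈ C, T x ∈ C)
    (hTne : ∀ x ∈ C, ∀ y ∈ C, dist (T x) (T y) ≤ dist x y)
    (p : X) (hpC : p ∈ C) (hpfix : T p = p)
    (u : X) (huC : u ∈ C)
    (lam beta : ℕ → ℝ)
    (hlam : ∀ n, lam n ∈ Set.Icc (0:ℝ) 1) (hbeta : ∀ n, beta n ∈ Set.Icc (0:ℝ) 1)
    (x y : ℕ → X) (hx0 : x 0 ∈ C)
    (hy : ∀ n, y n = H.W u (x n) (beta n))
    (hx : ∀ n, x (n + 1) = H.W (y n) (T (y n)) (lam n))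
    (M : ℝ) (hM : M = max (dist (x 0) p) (dist u p))
    (σ₂ σ₃ σ₄ : ℕ → ℕ)
    (hσ₂ : ∀ k : ℕ, ∀ n ≥ σ₂ k,
      |∏ i ∈ Finset.range (n + 1), beta (i + 1)| ≤ 1 / (k + 1))
    (hσ₃ : ∀ k : ℕ, ∀ n ≥ σ₃ k, ∀ q : ℕ,
      ∑ i ∈ Finset.Icc (n + 1) (n + q), |beta (i + 1) - beta i| ≤ 1 / (k + 1))
    (hσ₄ : ∀ k : ℕ, ∀ n ≥ σ₄ k, ∀ q : ℕ,
      ∑ i ∈ Finset.Icc (n + 1) (n + q), |lam (i + 1) - lam i| ≤ 1 / (k + 1))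
    (K : ℕ) (hK : M ≤ (K : ℝ))
    (χ : ℕ → ℕ)
    (hχ : ∀ k : ℕ, χ k = max (σ₃ (8 * K * (k + 1) - 1)) (σ₄ (8 * K * (k + 1) - 1)))
    (ψ₀ : ℕ → ℕ) (hψ₀pos : ∀ k, 0 < ψ₀ k)
    (hψ₀ : ∀ k : ℕ, 1 / (ψ₀ k : ℝ) ≤ ∏ i ∈ Finset.range (χ (3 * k + 2) + 1), beta (i + 1))
    (Sg : ℕ → ℕ)
    (hSg : ∀ k : ℕ,
      Sg k = max (σ₂ (6 * K * (k + 1) * ψ₀ k - 1)) (χ (3 * k + 2) + 1) + 1) :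
    ∀ k : ℕ, ∀ n ≥ Sg k, dist (x n) (x (n + 1)) ≤ 1 / (k + 1) := by
  intro k n hn
  subst hM
  have h : TikhonovMannIteration H C T p u lam beta x y :=
    ⟨hCconv, hTmaps, hTne, hpC, hpfix, huC, hlam, hbeta, hx0, hy, hx⟩
  have hβ₀ i : 0 ≤ beta i := (hbeta i).1
  set m := χ (3 * k + 2)
  obtain ⟨q, rfl⟩ : ∃ q, n = m + q + 1 := ⟨n - m - 1, by grind⟩
  have hP := natCast_mul_le_one_div (a := 2 * K * ψ₀ k) (b := 3 * (k + 1)) (by positivity)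
    (by ring) ((le_abs_self _).trans (hσ₂ (6 * K * (k + 1) * ψ₀ k - 1) (m + q) (by grind)))
  have hSβ := natCast_mul_le_one_div (a := 2 * K) (b := 12 * (k + 1)) (by positivity) (by ring)
    (hσ₃ _ m ((le_max_left _ _).trans (hχ _).ge) q)
  have hSlam := natCast_mul_le_one_div (a := 2 * K) (b := 12 * (k + 1)) (by positivity) (by ring)
    (hσ₄ _ m ((le_max_right _ _).trans (hχ _).ge) q)
  have hprod := prod_Icc_le_mul_prod_range (fun i => hβ₀ (i + 1))
    (by exact_mod_cast hψ₀pos k) (hψ₀ k) q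
  have hA : 0 ≤ ∏ i ∈ Icc (m + 1) (m + q), beta (i + 1) := prod_nonneg fun i _ => hβ₀ (i + 1)
  push_cast at hP hSβ hSlam
  calc _ ≤ 2 * K * (ψ₀ k * ∏ i ∈ range (m + q + 1), beta (i + 1) +
        ∑ i ∈ Icc (m + 1) (m + q), |beta (i + 1) - beta i| +
        ∑ i ∈ Icc (m + 1) (m + q), |lam (i + 1) - lam i|) :=
        (h.dist_le_two_mul_prod_add_sum m q).trans (by gcongr)
    _ ≤ 1 / (3 * (k + 1)) + 1 / (12 * (k + 1)) + 1 / (12 * (k + 1)) := by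
        linear_combination hP + hSβ + hSlam
    _ = 1 / (2 * (k + 1)) := by field_simp; ring
    _ ≤ 1 / (k + 1) := by gcongr; linarith

theorem tm_as_reg_C2q
    {X : Type*} [MetricSpace X] (H : WHyp X) (C : Set X)
    (hCconv : ∀ x ∈ C, ∀ y ∈ C, ∀ l ∈ Set.Icc (0:ℝ) 1, H.W x y l ∈ C)
    (T : X → X) (hTmaps : ∀ x ∈ C, T x ∈ C)
    (hTne : ∀ x ∈ C, ∀ y ∈ C, dist (T x) (T y) ≤ dist x y)
    (p : X) (hpC : p ∈ C) (hpfix : T p = p)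
    (u : X) (huC : u ∈ C)
    (lam beta : ℕ → ℝ)
    (hlam : ∀ n, lam n ∈ Set.Icc (0:ℝ) 1) (hbeta : ∀ n, beta n ∈ Set.Icc (0:ℝ) 1)
    (x y : ℕ → X) (hx0 : x 0 ∈ C)
    (hy : ∀ n, y n = H.W u (x n) (beta n))
    (hx : ∀ n, x (n + 1) = H.W (y n) (T (y n)) (lam n))
    (M : ℝ) (hM : M = max (dist (x 0) p) (dist u p))
    (hbpos : ∀ n, 0 < beta n)
    (σ₂ σ₃ σ₄ : ℕ → ℕ)
    (hσ₂ : ∀ k : ℕ, ∀ n ≥ σ₂ k,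
      |∏ i ∈ Finset.range (n + 1), beta (i + 1)| ≤ 1 / (k + 1))
    (hσ₃ : ∀ k : ℕ, ∀ n ≥ σ₃ k, ∀ q : ℕ,
      ∑ i ∈ Finset.Icc (n + 1) (n + q), |beta (i + 1) - beta i| ≤ 1 / (k + 1))
    (hσ₄ : ∀ k : ℕ, ∀ n ≥ σ₄ k, ∀ q : ℕ,
      ∑ i ∈ Finset.Icc (n + 1) (n + q), |lam (i + 1) - lam i| ≤ 1 / (k + 1))
    (K : ℕ) (hK : M ≤ (K : ℝ))
    (χ : ℕ → ℕ)
    (hχ : ∀ k : ℕ, χ k = max (σ₃ (8 * K * (k + 1) - 1)) (σ₄ (8 * K * (k + 1) - 1)))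
    (ψ₀ : ℕ → ℕ) (hψ₀pos : ∀ k, 0 < ψ₀ k)
    (hψ₀ : ∀ k : ℕ, 1 / (ψ₀ k : ℝ) ≤ ∏ i ∈ Finset.range (χ (3 * k + 2) + 1), beta (i + 1))
    (Sg : ℕ → ℕ)
    (hSg : ∀ k : ℕ,
      Sg k = max (σ₂ (6 * K * (k + 1) * ψ₀ k - 1)) (χ (3 * k + 2) + 1) + 1) :
    ∀ k : ℕ, ∀ n ≥ Sg k, dist (x n) (x (n + 1)) ≤ 1 / (k + 1) :=
  tm_as_reg_C2q_general H C hCconv T hTmaps hTne p hpC hpfix u huC lam beta hlam hbeta x y hx0 hy hx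
    M hM σ₂ σ₃ σ₄ hσ₂ hσ₃ hσ₄ K hK χ hχ ψ₀ hψ₀pos hψ₀ Sg hSg
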